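/- arXiv:2604.19721 — 5 statements merged into one kernel-verified Lean document; each statement's English description precedes it below -/
import Mathlib

section
/- Let G be a finite simple graph. In the snake-in-the-box game on G, the first player has a winning strategy (i.e., there exists an opening vertex v such that the position after playing v is losing for the player to move) if and only if some maximum matching of G fails to cover every vertex of G (equivalently, G has no perfect matching). -/
/-- `M` is a matching of `G`: a set of edges of `G`, no two of which share a vertex. -/
def IsMatching {V : Type*} (G : SimpleGraph V) (M : Finset (Sym2 V)) : Prop :=
  (∀ e ∈ M, e ∈ G.edgeSet) ∧
  ∀ e ∈ M, ∀ f ∈ M, e ≠ f → ∀ v : V, v ∈ e → v ∉ f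

/-- The vertex `v` is covered by the matching `M`, i.e. it is an endpoint of an edge of `M`. -/
def Covers {V : Type*} (M : Finset (Sym2 V)) (v : V) : Prop := ∃ e ∈ M, v ∈ e

/-- `M` is a maximum matching of `G`: a matching of maximum cardinality among all matchings. -/
def IsMaximumMatching {V : Type*} (G : SimpleGraph V) (M : Finset (Sym2 V)) : Prop :=
  IsMatching G M ∧ ∀ M' : Finset (Sym2 V), IsMatching G M' → M'.card ≤ M.card

/-- The snake-in-the-box winning predicate: `Win G S v` means the player about to move from
the position with visited set `S` and current vertex `v ∈ S` has a winning strategy.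
`Win G S v` holds iff there is `w` adjacent to `v`, not yet visited, with `¬ Win G (insert w S) w`. -/
def Win {V : Type*} [Fintype V] [DecidableEq V] (G : SimpleGraph V) (S : Finset V) (v : V) :
    Prop :=
  ∃ w : V, ∃ _ : G.Adj v w, ∃ _ : w ∉ S, ¬ Win G (insert w S) w
termination_by Sᶜ.card
decreasing_by
  simp only [Finset.compl_insert]
  exact Finset.card_erase_lt_of_mem (Finset.mem_compl.mpr (by assumption))

namespace Snake
variable {V : Type*}

lemma matching_unique {G : SimpleGraph V} {M : Finset (Sym2 V)} (hM : IsMatching G M)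
    {e f : Sym2 V} (he : e ∈ M) (hf : f ∈ M) {v : V} (hve : v ∈ e) (hvf : v ∈ f) : e = f := by
  by_contra h
  exact hM.2 e he f hf h v hve hvf

lemma edge_other {G : SimpleGraph V} {M : Finset (Sym2 V)} (hM : IsMatching G M) {e : Sym2 V}
    (he : e ∈ M) {v : V} (hv : v ∈ e) : ∃ w, G.Adj v w ∧ e = s(v, w) := by
  induction e using Sym2.inductionOn with
  | hf x y =>
    have hadj : G.Adj x y := (G.mem_edgeSet).mp (hM.1 _ he)
    rcases Sym2.mem_iff.mp hv with rfl | rfl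
    · exact ⟨y, hadj, rfl⟩
    · exact ⟨x, hadj.symm, Sym2.eq_swap⟩

/-- Alternating path predicate: the list records the path in reverse (head = current end),
the last element is `M`-uncovered, and each prepended pair `p :: x` uses a non-matching step
`u—x` followed by the matching edge `s(x,p) ∈ M`. -/
inductive AP (G : SimpleGraph V) (M : Finset (Sym2 V)) : List V → Prop
  | base (v0 : V) (h : ¬ Covers M v0) : AP G M [v0]
  | step (p x u : V) (L : List V) (h : AP G M (u :: L)) (hadj : G.Adj u x)
      (hx : x ∉ u :: L) (hp : p ∉ x :: u :: L) (hm : s(x, p) ∈ M) :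
      AP G M (p :: x :: u :: L)

/-- Along an alternating path, any matching edge touching the path has both ends on it. -/
lemma AP_cover {G : SimpleGraph V} {M : Finset (Sym2 V)} (hM : IsMatching G M) :
    ∀ {L : List V}, AP G M L → ∀ y ∈ L, ∀ e ∈ M, y ∈ e → ∀ z ∈ e, z ∈ L := by
  intro L hap
  induction hap with
  | base v0 h =>
    intro y hy e he hye z hz
    simp only [List.mem_singleton] at hy
    subst hy
    exact absurd ⟨e, he, hye⟩ h
  | step p x u L h hadj hx hp hm ih =>
    intro y hy e he hye z hz
    rcases List.mem_cons.mp hy with rfl | hy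
    · have heq : e = s(x, y) := matching_unique hM he hm hye (Sym2.mem_iff.mpr (Or.inr rfl))
      subst heq
      rcases Sym2.mem_iff.mp hz with rfl | rfl
      · exact List.mem_cons_of_mem _ (List.mem_cons_self)
      · exact List.mem_cons_self
    rcases List.mem_cons.mp hy with rfl | hy
    · have heq : e = s(y, p) := matching_unique hM he hm hye (Sym2.mem_iff.mpr (Or.inl rfl))
      subst heq
      rcases Sym2.mem_iff.mp hz with rfl | rfl
      · exact List.mem_cons_of_mem _ (List.mem_cons_self)
      · exact List.mem_cons_self
    · exact List.mem_cons_of_mem _ (List.mem_cons_of_mem _ (ih y hy e he hye z hz))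

/-- `AP` only depends on `M` through edges touching the path. -/
lemma AP_congr {G : SimpleGraph V} {M M' : Finset (Sym2 V)} :
    ∀ {L : List V}, AP G M L →
    (∀ e : Sym2 V, (∃ v ∈ L, v ∈ e) → (e ∈ M ↔ e ∈ M')) → AP G M' L := by
  intro L hap
  induction hap with
  | base v0 h =>
    intro hag
    refine AP.base v0 ?_
    rintro ⟨e, he, hve⟩
    exact h ⟨e, (hag e ⟨v0, List.mem_singleton_self _, hve⟩).mpr he, hve⟩
  | step p x u L h hadj hx hp hm ih =>
    intro hag
    refine AP.step p x u L (ih ?_) hadj hx hp ?_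
    · rintro e ⟨v, hvL, hve⟩
      exact hag e ⟨v, List.mem_cons_of_mem _ (List.mem_cons_of_mem _ hvL), hve⟩
    · exact (hag s(x, p) ⟨x, List.mem_cons_of_mem _ (List.mem_cons_self),
        Sym2.mem_iff.mpr (Or.inl rfl)⟩).mp hm
lemma matching_subset {G : SimpleGraph V} {M M' : Finset (Sym2 V)} (hsub : M' ⊆ M)
    (hM : IsMatching G M) : IsMatching G M' :=
  ⟨fun e he => hM.1 e (hsub he),
   fun e he f hf hef v hve => hM.2 e (hsub he) f (hsub hf) hef v hve⟩

lemma matching_insert {G : SimpleGraph V} [DecidableEq V] {M : Finset (Sym2 V)}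
    (hM : IsMatching G M) {a b : V} (hab : G.Adj a b)
    (hA : ∀ e ∈ M, a ∉ e) (hB : ∀ e ∈ M, b ∉ e) :
    IsMatching G (insert s(a, b) M) ∧ (insert s(a, b) M).card = M.card + 1 := by
  have hnm : s(a, b) ∉ M := fun hmem => hA _ hmem (Sym2.mem_iff.mpr (Or.inl rfl))
  refine ⟨⟨?_, ?_⟩, Finset.card_insert_of_notMem hnm⟩
  · intro e he
    rcases Finset.mem_insert.mp he with rfl | he
    · exact G.mem_edgeSet.mpr hab
    · exact hM.1 e he
  · intro e he f hf hef v hve hvf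
    rcases Finset.mem_insert.mp he with he' | he
    · rcases Finset.mem_insert.mp hf with hf' | hf
      · exact hef (he'.trans hf'.symm)
      · rcases Sym2.mem_iff.mp (he' ▸ hve) with h1 | h1
        · exact hA f hf (h1 ▸ hvf)
        · exact hB f hf (h1 ▸ hvf)
    · rcases Finset.mem_insert.mp hf with hf' | hf
      · rcases Sym2.mem_iff.mp (hf' ▸ hvf) with h1 | h1
        · exact hA e he (h1 ▸ hve)
        · exact hB e he (h1 ▸ hve)
      · exact hM.2 e he f hf hef v hve hvf

/-- If an alternating path can be extended by an edge to an `M`-uncovered vertex,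
then `M` is not maximum: there is a matching with one more edge. -/
lemma aug_aux {G : SimpleGraph V} [DecidableEq V] : ∀ (n : ℕ) (M : Finset (Sym2 V)) (u : V)
    (L : List V), L.length = n → IsMatching G M → AP G M (u :: L) → ∀ (w : V), G.Adj u w →
    w ∉ u :: L → ¬ Covers M w →
    ∃ M', IsMatching G M' ∧ M'.card = M.card + 1 := by
  intro n
  induction n using Nat.strong_induction_on with
  | _ n ih =>
  intro M u L hlen hM hap w hadj hw hcov
  have hwne : ∀ e ∈ M, w ∉ e := fun e he hwe => hcov ⟨e, he, hwe⟩
  cases hap with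
  | base _ h =>
    have hune : ∀ e ∈ M, u ∉ e := fun e he hue => h ⟨e, he, hue⟩
    obtain ⟨h1, h2⟩ := matching_insert hM hadj hune hwne
    exact ⟨_, h1, h2⟩
  | step p x u' L'' h hadj' hx hp hm =>
    -- the list u :: L is p :: x :: u' :: L'' with p = u, s(x, u) ∈ M
    have hxu : s(x, u) ∈ M := hm
    have hune : ∀ e ∈ M.erase s(x, u), u ∉ e := by
      intro e he hue
      exact Finset.ne_of_mem_erase he
        (matching_unique hM (Finset.mem_of_mem_erase he) hxu hue
          (Sym2.mem_iff.mpr (Or.inr rfl)))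
    have hMe : IsMatching G (M.erase s(x, u)) :=
      matching_subset (Finset.erase_subset _ _) hM
    obtain ⟨hM1, hcard1⟩ := matching_insert hMe hadj hune
      (fun e he hwe => hwne e (Finset.mem_of_mem_erase he) hwe)
    set M1 : Finset (Sym2 V) := insert s(u, w) (M.erase s(x, u)) with hM1def
    have hcard1' : M1.card = M.card := by
      rw [hcard1, Finset.card_erase_of_mem hxu]
      have : 0 < M.card := Finset.card_pos.mpr ⟨_, hxu⟩
      omega
    have hwnot : w ∉ u' :: L'' := fun hmem =>
      hw (List.mem_cons_of_mem _ (List.mem_cons_of_mem _ hmem))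
    have hap1 : AP G M1 (u' :: L'') := by
      refine AP_congr h ?_
      rintro e ⟨v, hvL, hve⟩
      constructor
      · intro he
        refine Finset.mem_insert_of_mem (Finset.mem_erase.mpr ⟨?_, he⟩)
        rintro rfl
        rcases Sym2.mem_iff.mp hve with rfl | rfl
        · exact hx hvL
        · exact hp (List.mem_cons_of_mem _ hvL)
      · intro he
        rcases Finset.mem_insert.mp he with rfl | he
        · rcases Sym2.mem_iff.mp hve with rfl | rfl
          · exact absurd hvL (fun hh => hp (List.mem_cons_of_mem _ hh))
          · exact absurd hvL hwnot
        · exact Finset.mem_of_mem_erase he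
    have hcovx : ¬ Covers M1 x := by
      rintro ⟨e, he, hxe⟩
      rcases Finset.mem_insert.mp he with rfl | he
      · rcases Sym2.mem_iff.mp hxe with rfl | rfl
        · exact hp (List.mem_cons_self)
        · exact hw (List.mem_cons_of_mem _ (List.mem_cons_self))
      · have heq : e = s(x, u) :=
          matching_unique hM (Finset.mem_of_mem_erase he) hxu hxe
            (Sym2.mem_iff.mpr (Or.inl rfl))
        exact Finset.notMem_erase _ _ (heq ▸ he)
    have hlen'' : L''.length < n := by
      simp only [List.length_cons] at hlen
      omega
    obtain ⟨M2, hM2, hc2⟩ := ih L''.length hlen'' M1 u' L'' rfl hM1 hap1 x hadj' hx hcovx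
    exact ⟨M2, hM2, by rw [hc2, hcard1']⟩

lemma aug {G : SimpleGraph V} [DecidableEq V] (M : Finset (Sym2 V)) (u : V) (L : List V)
    (hM : IsMatching G M) (hap : AP G M (u :: L)) (w : V) (hadj : G.Adj u w)
    (hw : w ∉ u :: L) (hcov : ¬ Covers M w) :
    ∃ M', IsMatching G M' ∧ M'.card = M.card + 1 :=
  aug_aux L.length M u L rfl hM hap w hadj hw hcov

lemma notWin_aux {G : SimpleGraph V} [Fintype V] [DecidableEq V] {M : Finset (Sym2 V)}
    (hM : IsMatching G M) (hmax : ∀ M', IsMatching G M' → M'.card ≤ M.card) :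
    ∀ (n : ℕ) (S : Finset V) (u : V) (L : List V), Sᶜ.card = n →
    AP G M (u :: L) → (∀ y, y ∈ S ↔ y ∈ u :: L) → ¬ Win G S u := by
  intro n
  induction n using Nat.strong_induction_on with
  | _ n ih =>
  intro S u L hn hap hmem hwin
  rw [Win] at hwin
  obtain ⟨w, hadj, hwS, hnw⟩ := hwin
  apply hnw
  have hwL : w ∉ u :: L := fun h => hwS ((hmem w).mpr h)
  have hcovw : Covers M w := by
    by_contra hc
    obtain ⟨M', hM', hc'⟩ := aug M u L hM hap w hadj hwL hc
    have := hmax M' hM'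
    omega
  obtain ⟨e, he, hwe⟩ := hcovw
  obtain ⟨p, hpadj, rfl⟩ := edge_other hM he hwe
  have hpL : p ∉ w :: u :: L := by
    intro hh
    rcases List.mem_cons.mp hh with rfl | hh
    · exact hpadj.ne rfl
    · exact hwL (AP_cover hM hap p hh s(w, p) he (Sym2.mem_iff.mpr (Or.inr rfl)) w
        (Sym2.mem_iff.mpr (Or.inl rfl)))
  have hap' : AP G M (p :: w :: u :: L) := AP.step p w u L hap hadj hwL hpL he
  have hpS : p ∉ insert w S := by
    intro hh
    rcases Finset.mem_insert.mp hh with rfl | hh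
    · exact hpL (List.mem_cons_self)
    · exact hpL (List.mem_cons_of_mem _ ((hmem p).mp hh))
  rw [Win]
  refine ⟨p, hpadj, hpS, ?_⟩
  have hwc : w ∈ Sᶜ := Finset.mem_compl.mpr hwS
  have hpc : p ∈ (insert w S)ᶜ := Finset.mem_compl.mpr hpS
  rw [Finset.compl_insert] at hpc
  have hcard : (insert p (insert w S))ᶜ.card < n := by
    rw [Finset.compl_insert, Finset.compl_insert]
    calc ((Sᶜ.erase w).erase p).card < (Sᶜ.erase w).card :=
          Finset.card_erase_lt_of_mem hpc
      _ ≤ Sᶜ.card := Finset.card_erase_le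
      _ = n := hn
  refine ih _ hcard (insert p (insert w S)) p (w :: u :: L) rfl hap' ?_
  intro y
  simp only [Finset.mem_insert, List.mem_cons, hmem y]

lemma winAux {G : SimpleGraph V} [Fintype V] [DecidableEq V] (f : V → V)
    (hadj : ∀ v, G.Adj v (f v)) (hinv : ∀ v, f (f v) = v) :
    ∀ (n : ℕ) (S : Finset V) (u : V), Sᶜ.card = n → u ∈ S → f u ∉ S →
    (∀ y ∈ S, y ≠ u → f y ∈ S) → Win G S u := by
  intro n
  induction n using Nat.strong_induction_on with
  | _ n ih =>
  intro S u hn hu hfu hcl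
  rw [Win]
  refine ⟨f u, hadj u, hfu, ?_⟩
  intro hwin
  rw [Win] at hwin
  obtain ⟨y, hy, hyS, hny⟩ := hwin
  apply hny
  have hyS' : y ∉ S := fun h => hyS (Finset.mem_insert_of_mem h)
  have hyu : y ≠ u := fun h => hyS' (h ▸ hu)
  have hyfu : y ≠ f u := fun h => hyS (h ▸ Finset.mem_insert_self _ _)
  have hfy : f y ∉ insert y (insert (f u) S) := by
    intro hh
    rcases Finset.mem_insert.mp hh with h1 | hh
    · exact (hadj y).ne h1.symm
    rcases Finset.mem_insert.mp hh with h1 | h1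
    · apply hyu
      have := congrArg f h1
      rwa [hinv, hinv] at this
    · have hne : f y ≠ u := fun h => hyfu (by rw [← h, hinv])
      have h2 := hcl (f y) h1 hne
      rw [hinv] at h2
      exact hyS' h2
  have hfuc : f u ∈ Sᶜ := Finset.mem_compl.mpr hfu
  have hyc : y ∈ (insert (f u) S)ᶜ := Finset.mem_compl.mpr hyS
  rw [Finset.compl_insert] at hyc
  have hcard : (insert y (insert (f u) S))ᶜ.card < n := by
    rw [Finset.compl_insert, Finset.compl_insert]
    calc ((Sᶜ.erase (f u)).erase y).card < (Sᶜ.erase (f u)).card :=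
          Finset.card_erase_lt_of_mem hyc
      _ ≤ Sᶜ.card := Finset.card_erase_le
      _ = n := hn
  refine ih _ hcard _ y rfl (Finset.mem_insert_self _ _) hfy ?_
  intro z hz hzy
  rcases Finset.mem_insert.mp hz with rfl | hz
  · exact absurd rfl hzy
  rcases Finset.mem_insert.mp hz with rfl | hz
  · rw [hinv]
    exact Finset.mem_insert_of_mem (Finset.mem_insert_of_mem hu)
  · by_cases hzu : z = u
    · subst hzu
      exact Finset.mem_insert_of_mem (Finset.mem_insert_self _ _)
    · exact Finset.mem_insert_of_mem (Finset.mem_insert_of_mem (hcl z hz hzu))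

end Snake

/-- **Berge's snake-in-the-box theorem.** The first player has a winning strategy in the
snake-in-the-box game on a finite simple graph `G` iff some maximum matching of `G` fails
to cover every vertex of `G`. -/
theorem firstPlayer_wins_iff_maximumMatching_not_perfect {V : Type*} [Fintype V]
    [DecidableEq V] (G : SimpleGraph V) :
    (∃ v : V, ¬ Win G {v} v) ↔
      ∃ M : Finset (Sym2 V), IsMaximumMatching G M ∧ ∃ v : V, ¬ Covers M v := by
  classical
  constructor
  · rintro ⟨v, hv⟩
    by_contra hno
    push_neg at hno
    obtain ⟨M, hMmem, hMmax⟩ := Finset.exists_max_image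
      ((Finset.univ : Finset (Finset (Sym2 V))).filter fun M => IsMatching G M) Finset.card
      ⟨∅, Finset.mem_filter.mpr ⟨Finset.mem_univ _, ⟨fun e he => absurd he (by simp),
        fun e he => absurd he (by simp)⟩⟩⟩
    have hM : IsMatching G M := (Finset.mem_filter.mp hMmem).2
    have hmax : ∀ M', IsMatching G M' → M'.card ≤ M.card := fun M' h =>
      hMmax M' (Finset.mem_filter.mpr ⟨Finset.mem_univ _, h⟩)
    have hcov : ∀ w, Covers M w := hno M ⟨hM, hmax⟩
    have hex : ∀ w : V, ∃ z, G.Adj w z ∧ s(w, z) ∈ M := by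
      intro w
      obtain ⟨e, he, hwe⟩ := hcov w
      obtain ⟨z, hz, rfl⟩ := Snake.edge_other hM he hwe
      exact ⟨z, hz, he⟩
    choose f hfadj hfm using hex
    have hinv : ∀ w, f (f w) = w := by
      intro w
      have heq : s(f w, f (f w)) = s(w, f w) :=
        Snake.matching_unique hM (hfm (f w)) (hfm w) (Sym2.mem_iff.mpr (Or.inl rfl))
          (Sym2.mem_iff.mpr (Or.inr rfl))
      rcases Sym2.eq_iff.mp heq with ⟨h1, _⟩ | ⟨_, h2⟩
      · exact absurd h1.symm (hfadj w).ne
      · exact h2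
    refine hv (Snake.winAux f hfadj hinv _ {v} v rfl (Finset.mem_singleton_self v) ?_ ?_)
    · simp only [Finset.mem_singleton]
      exact (hfadj v).ne'
    · intro y hy hne
      exact absurd (Finset.mem_singleton.mp hy) hne
  · rintro ⟨M, ⟨hM, hmax⟩, v, hv⟩
    refine ⟨v, Snake.notWin_aux hM hmax _ {v} v [] rfl (Snake.AP.base v hv) ?_⟩
    intro y
    simp
end

section
/- Let G be a finite simple graph, let M be a maximum matching of G, and let v be a vertex of G not covered by M. Then v is a winning opening move for the first player in the snake-in-the-box game on G, i.e., Win({v}, v) fails. -/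
/-! The player who must move from a vertex `v` left uncovered by a maximum matching `M` loses.
Any move goes to a covered vertex `w` (otherwise `vw` would enlarge `M`), and the opponent answers
with the partner `y` of `w`. Trading `wy` for `vw` gives a maximum matching that leaves `y`
uncovered, so the situation repeats. The visited set stays a union of matching edges and the
current vertex, which is what guarantees that `y` has not been visited yet. -/

def IsClosedUnder {V : Type*} (M : Finset (Sym2 V)) (S : Finset V) : Prop :=
  ∀ a b, s(a, b) ∈ M → a ∈ S → b ∈ S

section

variable {V : Type*} {G : SimpleGraph V} {M N : Finset (Sym2 V)} {e : Sym2 V}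
  {v w y : V}

theorem Covers.mono (h : N ⊆ M) (hv : Covers N v) : Covers M v :=
  let ⟨e, he, hve⟩ := hv
  ⟨e, h he, hve⟩

theorem IsMatching.mono (hM : IsMatching G M) (h : N ⊆ M) : IsMatching G N :=
  ⟨fun e he => hM.1 e (h he), fun e he f hf => hM.2 e (h he) f (h hf)⟩

theorem IsMatching.eq_of_mem (hM : IsMatching G M) {f : Sym2 V} (he : e ∈ M) (hf : f ∈ M)
    (hve : v ∈ e) (hvf : v ∈ f) : e = f := by
  by_contra hef
  exact hM.2 e he f hf hef v hve hvf

theorem IsMaximumMatching.of_card_eq (hM : IsMaximumMatching G M) (hN : IsMatching G N)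
    (h : N.card = M.card) : IsMaximumMatching G N :=
  ⟨hN, fun M' hM' => h ▸ hM.2 M' hM'⟩

theorem isClosedUnder_singleton (hv : ¬ Covers M v) : IsClosedUnder M {v} := by
  intro a b hab ha
  rw [Finset.mem_singleton] at ha
  exact absurd ⟨_, hab, ha ▸ Sym2.mem_mk_left a b⟩ hv

variable [DecidableEq V]

theorem IsMatching.not_covers_erase (hM : IsMatching G M) (he : e ∈ M) (hve : v ∈ e) :
    ¬ Covers (M.erase e) v := by
  rintro ⟨f, hf, hvf⟩
  exact (Finset.mem_erase.mp hf).1 (hM.eq_of_mem he (Finset.mem_of_mem_erase hf) hve hvf).symm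

protected theorem IsMatching.insert (hM : IsMatching G M) (he : e ∈ G.edgeSet)
    (hcov : ∀ v ∈ e, ¬ Covers M v) : IsMatching G (insert e M) := by
  refine ⟨fun f hf => ?_, fun f hf g hg hfg v hvf hvg => ?_⟩
  · rcases Finset.mem_insert.mp hf with rfl | hf
    exacts [he, hM.1 f hf]
  rcases Finset.mem_insert.mp hf with rfl | hfM <;> rcases Finset.mem_insert.mp hg with rfl | hgM
  · exact hfg rfl
  · exact hcov v hvf ⟨g, hgM, hvg⟩
  · exact hcov v hvg ⟨f, hfM, hvf⟩
  · exact hM.2 f hfM g hgM hfg v hvf hvg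

namespace IsMaximumMatching

theorem covers_of_adj (hM : IsMaximumMatching G M) (hv : ¬ Covers M v) (hvw : G.Adj v w) :
    Covers M w := by
  by_contra hw
  have hvw_notMem : s(v, w) ∉ M := fun h => hv ⟨_, h, Sym2.mem_mk_left v w⟩
  have hins : IsMatching G (insert s(v, w) M) :=
    hM.1.insert hvw (by rintro z hz; rcases Sym2.mem_iff.mp hz with rfl | rfl <;> assumption)
  have hle := hM.2 _ hins
  rw [Finset.card_insert_of_notMem hvw_notMem] at hle
  omega

theorem swap (hM : IsMaximumMatching G M) (hv : ¬ Covers M v) (hvw : G.Adj v w)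
    (hwy : s(w, y) ∈ M) :
    IsMaximumMatching G (insert s(v, w) (M.erase s(w, y))) ∧
      ¬ Covers (insert s(v, w) (M.erase s(w, y))) y := by
  have hvE : ¬ Covers (M.erase s(w, y)) v := fun h => hv (h.mono (Finset.erase_subset _ _))
  have hwE : ¬ Covers (M.erase s(w, y)) w := hM.1.not_covers_erase hwy (Sym2.mem_mk_left w y)
  have hyE : ¬ Covers (M.erase s(w, y)) y := hM.1.not_covers_erase hwy (Sym2.mem_mk_right w y)
  have hvw_notMem : s(v, w) ∉ M.erase s(w, y) := fun h => hvE ⟨_, h, Sym2.mem_mk_left v w⟩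
  have hyv : y ≠ v := fun h => hv ⟨_, hwy, h ▸ Sym2.mem_mk_right w y⟩
  refine ⟨hM.of_card_eq ((hM.1.mono (Finset.erase_subset _ _)).insert hvw ?_) ?_, ?_⟩
  · rintro z hz
    rcases Sym2.mem_iff.mp hz with rfl | rfl <;> assumption
  · rw [Finset.card_insert_of_notMem hvw_notMem, Finset.card_erase_of_mem hwy,
      Nat.sub_add_cancel (Finset.card_pos.mpr ⟨_, hwy⟩)]
  · rintro ⟨f, hf, hyf⟩
    rcases Finset.mem_insert.mp hf with rfl | hf
    · rcases Sym2.mem_iff.mp hyf with rfl | rfl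
      exacts [hyv rfl, (G.mem_edgeSet.mp (hM.1.1 _ hwy)).ne rfl]
    · exact hyE ⟨f, hf, hyf⟩

end IsMaximumMatching

theorem IsClosedUnder.swap {S : Finset V} (hS : IsClosedUnder M S) (hM : IsMatching G M)
    (hvS : v ∈ S) (hwy : s(w, y) ∈ M) :
    IsClosedUnder (insert s(v, w) (M.erase s(w, y))) (insert y (insert w S)) := by
  intro a b hab ha
  rcases Finset.mem_insert.mp hab with hvw | hab
  · rcases Sym2.eq_iff.mp hvw with ⟨rfl, rfl⟩ | ⟨rfl, rfl⟩ <;> simp [hvS]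
  obtain ⟨hne, habM⟩ := Finset.mem_erase.mp hab
  have hne_wy : ∀ z ∈ s(w, y), a ≠ z := by
    rintro z hz rfl
    exact hne (hM.eq_of_mem habM hwy (Sym2.mem_mk_left a b) hz)
  simp only [Finset.mem_insert] at ha ⊢
  rcases ha with rfl | rfl | ha
  · exact absurd rfl (hne_wy a (Sym2.mem_mk_right w a))
  · exact absurd rfl (hne_wy a (Sym2.mem_mk_left a y))
  · exact Or.inr (Or.inr (hS a b habM ha))

variable [Fintype V]

theorem not_win_of_not_covers {S : Finset V} (hM : IsMaximumMatching G M) (hv : ¬ Covers M v)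
    (hvS : v ∈ S) (hS : IsClosedUnder M S) : ¬ Win G S v := by
  induction hn : Sᶜ.card using Nat.strong_induction_on generalizing S v M with
  | _ n ih =>
    rw [Win]
    rintro ⟨w, hvw, hwS, hw⟩
    obtain ⟨e, he, hwe⟩ := hM.covers_of_adj hv hvw
    obtain ⟨y, rfl⟩ := Sym2.mem_iff_exists.mp hwe
    have hwy : G.Adj w y := G.mem_edgeSet.mp (hM.1.1 _ he)
    have hyS : y ∉ S := fun hy => hwS (hS y w (Sym2.eq_swap ▸ he) hy)
    obtain ⟨hM', hy⟩ := hM.swap hv hvw he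
    have hcard : (insert y (insert w S))ᶜ.card < n := by
      rw [← hn, Finset.compl_insert, Finset.compl_insert]
      exact (Finset.card_erase_le).trans_lt
        (Finset.card_erase_lt_of_mem (Finset.mem_compl.mpr hwS))
    apply hw
    rw [Win]
    exact ⟨y, hwy, by simp [hwy.ne', hyS], ih _ hcard hM' hy (Finset.mem_insert_self y _)
      (hS.swap hM.1 hvS he) rfl⟩

end

/-- If `M` is a maximum matching of a finite simple graph `G` and `v` is uncovered by `M`,
then `v` is a winning opening move for the first player in snake-in-the-box on `G`. -/
theorem uncovered_vertex_is_winning_opening {V : Type*} [Fintype V] [DecidableEq V]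
    (G : SimpleGraph V) (M : Finset (Sym2 V)) (hM : IsMaximumMatching G M) (v : V)
    (hv : ¬ Covers M v) : ¬ Win G {v} v :=
  not_win_of_not_covers hM hv (Finset.mem_singleton_self v) (isClosedUnder_singleton hv)
end

section
/- Let G be a finite simple graph. A vertex v of G is a winning opening move for the first player in the snake-in-the-box game on G (i.e., Win({v}, v) fails) if and only if v is inessential, i.e., there exists a maximum matching of G that does not cover v. -/
/-!
Call `v` inessential in a vertex set `A` if some maximum matching of `G` inside `A` misses `v`.
For `v ∉ A`, the vertex `v` is essential in `insert v A` exactly when it has a neighbour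
`w ∈ A` that is inessential in `A`: an edge `vw` extends a maximum matching of `A` missing `w`,
and conversely deleting the edge at `v` from a maximum matching of `insert v A` leaves a maximum
matching of `A` missing the partner of `v`. This is the recursion defining `Win`, with `A` the set
of unvisited vertices, so by induction the player to move from `v` wins iff `v` is essential
among `v` and the unvisited vertices.
-/

open Finset

section

variable {V : Type*} {G : SimpleGraph V}

theorem IsMatching.subset {M N : Finset (Sym2 V)} (hN : IsMatching G N) (h : M ⊆ N) :
    IsMatching G M :=
  ⟨fun e he => hN.1 e (h he), fun e he f hf => hN.2 e (h he) f (h hf)⟩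

theorem IsMatching.insert_edge [DecidableEq V] {M : Finset (Sym2 V)} {v w : V}
    (hM : IsMatching G M) (hadj : G.Adj v w) (hv : ¬ Covers M v) (hw : ¬ Covers M w) :
    IsMatching G (insert s(v, w) M) := by
  have hfree : ∀ f ∈ M, ∀ x ∈ s(v, w), x ∉ f := by
    rintro f hf x hx hxf
    rcases Sym2.mem_iff.mp hx with rfl | rfl
    exacts [hv ⟨f, hf, hxf⟩, hw ⟨f, hf, hxf⟩]
  refine ⟨?_, ?_⟩
  · simp only [mem_insert, forall_eq_or_imp]
    exact ⟨hadj, hM.1⟩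
  · simp only [mem_insert]
    rintro e (rfl | he) f (rfl | hf) hef x hxe
    · exact absurd rfl hef
    · exact hfree f hf x hxe
    · exact fun hxf => hfree e he x hxf hxe
    · exact hM.2 e he f hf hef x hxe

variable (G) in
def IsMatchingIn (A : Finset V) (M : Finset (Sym2 V)) : Prop :=
  IsMatching G M ∧ ∀ e ∈ M, ∀ x ∈ e, x ∈ A

variable (G) in
def IsMaxMatchingIn (A : Finset V) (M : Finset (Sym2 V)) : Prop :=
  IsMatchingIn G A M ∧ ∀ M', IsMatchingIn G A M' → M'.card ≤ M.card

variable (G) in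
def IsInessentialIn (A : Finset V) (v : V) : Prop :=
  ∃ M, IsMaxMatchingIn G A M ∧ ¬ Covers M v

theorem IsMatchingIn.mono {A B : Finset V} {M : Finset (Sym2 V)} (hM : IsMatchingIn G A M)
    (h : A ⊆ B) : IsMatchingIn G B M :=
  ⟨hM.1, fun e he x hx => h (hM.2 e he x hx)⟩

theorem IsMatchingIn.subset {A : Finset V} {M N : Finset (Sym2 V)} (hN : IsMatchingIn G A N)
    (h : M ⊆ N) : IsMatchingIn G A M :=
  ⟨hN.1.subset h, fun e he => hN.2 e (h he)⟩

theorem IsMatchingIn.not_covers {A : Finset V} {M : Finset (Sym2 V)} {v : V}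
    (hM : IsMatchingIn G A M) (hv : v ∉ A) : ¬ Covers M v :=
  fun ⟨e, he, hve⟩ => hv (hM.2 e he v hve)

theorem IsMatchingIn.of_insert [DecidableEq V] {A : Finset V} {M : Finset (Sym2 V)} {v : V}
    (hM : IsMatchingIn G (insert v A) M) (hv : ¬ Covers M v) : IsMatchingIn G A M := by
  refine ⟨hM.1, fun e he x hx => ?_⟩
  rcases mem_insert.mp (hM.2 e he x hx) with rfl | hxA
  exacts [absurd ⟨e, he, hx⟩ hv, hxA]

theorem exists_isMaxMatchingIn (G : SimpleGraph V) (A : Finset V) :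
    ∃ M, IsMaxMatchingIn G A M := by
  classical
  have hsub : ∀ M, IsMatchingIn G A M → M ∈ A.sym2.powerset := fun M hM =>
    mem_powerset.mpr fun e he => mem_sym2_iff.mpr (hM.2 e he)
  obtain ⟨M, hM, hmax⟩ := exists_max_image (A.sym2.powerset.filter (IsMatchingIn G A)) card
    ⟨∅, mem_filter.mpr ⟨empty_mem_powerset _, ⟨by simp [IsMatching], by simp⟩⟩⟩
  exact ⟨M, (mem_filter.mp hM).2, fun M' hM' => hmax M' (mem_filter.mpr ⟨hsub M' hM', hM'⟩)⟩

section Recursion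

variable [DecidableEq V] {A : Finset V} {v w : V}

theorem not_isInessentialIn_insert_of_adj (hv : v ∉ A) (hwA : w ∈ A) (hadj : G.Adj v w)
    (hw : IsInessentialIn G A w) : ¬ IsInessentialIn G (insert v A) v := by
  rintro ⟨N, ⟨hN, hNmax⟩, hNv⟩
  obtain ⟨M, ⟨hM, hMmax⟩, hMw⟩ := hw
  have hvw : s(v, w) ∉ M := fun h => hM.not_covers hv ⟨_, h, Sym2.mem_mk_left v w⟩
  have hM' : IsMatchingIn G (insert v A) (insert s(v, w) M) := by
    refine ⟨hM.1.insert_edge hadj (hM.not_covers hv) hMw, fun e he x hx => ?_⟩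
    rcases mem_insert.mp he with rfl | he
    · rcases Sym2.mem_iff.mp hx with rfl | rfl
      exacts [mem_insert_self _ _, mem_insert_of_mem hwA]
    · exact mem_insert_of_mem (hM.2 e he x hx)
  have hbig : M.card + 1 ≤ N.card := card_insert_of_notMem hvw ▸ hNmax _ hM'
  have hsmall : N.card ≤ M.card := hMmax N (hN.of_insert hNv)
  omega

theorem exists_adj_isInessentialIn_of_not_isInessentialIn_insert (hv : v ∉ A)
    (h : ¬ IsInessentialIn G (insert v A) v) :
    ∃ w ∈ A, G.Adj v w ∧ IsInessentialIn G A w := by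
  obtain ⟨N, hN, hNmax⟩ := exists_isMaxMatchingIn G (insert v A)
  obtain ⟨e, he, hve⟩ : Covers N v := by
    by_contra hNv
    exact h ⟨N, ⟨hN, hNmax⟩, hNv⟩
  obtain ⟨w, rfl⟩ : ∃ w, s(v, w) = e := ⟨_, Sym2.other_spec hve⟩
  have hadj : G.Adj v w := hN.1.1 _ he
  have hwA : w ∈ A :=
    (mem_insert.mp (hN.2 _ he w (Sym2.mem_mk_right v w))).resolve_left hadj.ne'
  have hfree : ∀ x ∈ s(v, w), ¬ Covers (N.erase s(v, w)) x := fun x hx ⟨f, hf, hxf⟩ =>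
    hN.1.2 _ he f (mem_of_mem_erase hf) (ne_of_mem_erase hf).symm x hx hxf
  refine ⟨w, hwA, hadj, N.erase s(v, w), ⟨?_, fun M hM => ?_⟩, hfree w (Sym2.mem_mk_right v w)⟩
  · exact (hN.subset (erase_subset _ _)).of_insert (hfree v (Sym2.mem_mk_left v w))
  · -- a matching of `A` as large as `N` would be maximum in `insert v A` and miss `v`
    have hle : M.card ≤ N.card := hNmax M (hM.mono (subset_insert v A))
    have hne : M.card ≠ N.card := fun heq =>
      h ⟨M, ⟨hM.mono (subset_insert v A), fun M' hM' => heq ▸ hNmax M' hM'⟩, hM.not_covers hv⟩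
    rw [card_erase_of_mem he]
    omega

theorem not_isInessentialIn_insert_iff (hv : v ∉ A) :
    ¬ IsInessentialIn G (insert v A) v ↔ ∃ w ∈ A, G.Adj v w ∧ IsInessentialIn G A w :=
  ⟨exists_adj_isInessentialIn_of_not_isInessentialIn_insert hv,
    fun ⟨_, hwA, hadj, hw⟩ => not_isInessentialIn_insert_of_adj hv hwA hadj hw⟩

end Recursion

theorem isMaxMatchingIn_univ_iff [Fintype V] {M : Finset (Sym2 V)} :
    IsMaxMatchingIn G univ M ↔ IsMaximumMatching G M := by
  have hin : ∀ M : Finset (Sym2 V), IsMatchingIn G univ M ↔ IsMatching G M :=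
    fun M => ⟨And.left, fun h => ⟨h, fun _ _ x _ => mem_univ x⟩⟩
  simp only [IsMaxMatchingIn, IsMaximumMatching, hin]

theorem win_iff [Fintype V] [DecidableEq V] {S : Finset V} {v : V} :
    Win G S v ↔ ∃ w, G.Adj v w ∧ w ∉ S ∧ ¬ Win G (insert w S) w := by
  rw [Win]
  simp only [exists_prop]

theorem win_iff_not_isInessentialIn [Fintype V] [DecidableEq V] {S : Finset V} {v : V}
    (hv : v ∈ S) : Win G S v ↔ ¬ IsInessentialIn G (insert v Sᶜ) v := by
  rw [win_iff, not_isInessentialIn_insert_iff (by simpa using hv)]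
  refine exists_congr fun w => ?_
  by_cases hw : w ∈ S
  · simp [hw]
  · have ih := win_iff_not_isInessentialIn (mem_insert_self w S)
    rw [compl_insert, insert_erase (mem_compl.mpr hw)] at ih
    rw [ih, not_not, mem_compl]
    tauto
termination_by Sᶜ.card
decreasing_by
  simp only [compl_insert]
  exact card_erase_lt_of_mem (mem_compl.mpr hw)

end

/-- A vertex `v` of a finite simple graph `G` is a winning opening move in snake-in-the-box
iff `v` is inessential, i.e. some maximum matching of `G` does not cover `v`. -/
theorem winning_opening_iff_inessential {V : Type*} [Fintype V] [DecidableEq V]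
    (G : SimpleGraph V) (v : V) :
    ¬ Win G {v} v ↔ ∃ M : Finset (Sym2 V), IsMaximumMatching G M ∧ ¬ Covers M v := by
  rw [win_iff_not_isInessentialIn (mem_singleton_self v), not_not, insert_compl_self]
  simp only [IsInessentialIn, isMaxMatchingIn_univ_iff]
end

section
/- Let n ≥ 2 and suppose p and q are distinct primes with n/2 < p ≤ n and n/2 < q ≤ n. Then p ∈ D(G_n): there exists a maximum matching of the divisibility graph G_n that does not cover the vertex p. -/
/-- The divisibility graph on `{1, …, n}`: distinct `i, j` are adjacent iff `i ∣ j` or `j ∣ i`. -/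
def divGraph (n : ℕ) : SimpleGraph {m : ℕ // m ∈ Finset.Icc 1 n} :=
  SimpleGraph.fromRel (fun i j => (i : ℕ) ∣ (j : ℕ) ∨ (j : ℕ) ∣ (i : ℕ))

section Matching

variable {V : Type*} {G : SimpleGraph V}

theorem exists_isMaximumMatching [Finite V] (G : SimpleGraph V) :
    ∃ M : Finset (Sym2 V), IsMaximumMatching G M := by
  classical
  have := Fintype.ofFinite V
  have hempty : IsMatching G ∅ := ⟨by simp, by simp⟩
  obtain ⟨M, hM, hmax⟩ := Finset.exists_max_image
    (Finset.univ.filter (IsMatching G)) Finset.card ⟨∅, by simpa using hempty⟩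
  exact ⟨M, (Finset.mem_filter.mp hM).2,
    fun M' hM' => hmax M' (Finset.mem_filter.mpr ⟨Finset.mem_univ _, hM'⟩)⟩

theorem IsMatching.eq_of_mem_of_mem {M : Finset (Sym2 V)} (hM : IsMatching G M)
    {e f : Sym2 V} (he : e ∈ M) (hf : f ∈ M) {v : V} (hve : v ∈ e) (hvf : v ∈ f) :
    e = f := by
  by_contra hef
  exact hM.2 e he f hf hef v hve hvf

theorem eq_mk_of_mem_edgeSet_of_forall_adj {e : Sym2 V} (he : e ∈ G.edgeSet) {u w : V}
    (hue : u ∈ e) (hu : ∀ x, G.Adj u x → x = w) : e = s(u, w) := by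
  obtain ⟨x, rfl⟩ := Sym2.mem_iff_exists.mp hue
  rw [hu x he]

theorem IsMaximumMatching.insert_erase [DecidableEq V] {M : Finset (Sym2 V)}
    (hM : IsMaximumMatching G M) {e f : Sym2 V} (he : e ∈ M) (hf : f ∈ G.edgeSet)
    (hdisj : ∀ g ∈ M.erase e, ∀ x ∈ f, x ∉ g) :
    IsMaximumMatching G (insert f (M.erase e)) := by
  have hfM : f ∉ M.erase e := fun hf' => hdisj f hf' _ f.out_fst_mem f.out_fst_mem
  have hcard : (insert f (M.erase e)).card = M.card := by
    rw [Finset.card_insert_of_notMem hfM, Finset.card_erase_add_one he]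
  refine ⟨⟨?_, ?_⟩, fun M' hM' => hcard ▸ hM.2 M' hM'⟩
  · intro g hg
    rcases Finset.mem_insert.mp hg with rfl | hgM
    · exact hf
    · exact hM.1.1 g (Finset.mem_of_mem_erase hgM)
  · intro g hg g' hg' hgg' v hvg
    rcases Finset.mem_insert.mp hg with rfl | hgM <;>
      rcases Finset.mem_insert.mp hg' with rfl | hgM'
    · exact absurd rfl hgg'
    · exact hdisj g' hgM' v hvg
    · exact fun hvg' => hdisj g hgM v hvg' hvg
    · exact hM.1.2 g (Finset.mem_of_mem_erase hgM) g' (Finset.mem_of_mem_erase hgM') hgg' v hvg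

theorem exists_isMaximumMatching_not_covers_of_common_neighbor [Finite V] {u v w : V}
    (huv : u ≠ v) (hu : ∀ x, G.Adj u x → x = w) (hv : ∀ x, G.Adj v x → x = w)
    (hvw : G.Adj v w) :
    ∃ M : Finset (Sym2 V), IsMaximumMatching G M ∧ ¬ Covers M u := by
  classical
  obtain ⟨M, hM⟩ := exists_isMaximumMatching G
  refine (em (Covers M u)).elim (fun ⟨e, he, hue⟩ => ?_) fun hcov => ⟨M, hM, hcov⟩
  have he_eq : e = s(u, w) := eq_mk_of_mem_edgeSet_of_forall_adj (hM.1.1 e he) hue hu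
  have hdisj : ∀ g ∈ M.erase e, ∀ x ∈ s(w, v), x ∉ g := by
    intro g hg x hx hxg
    have hgM := Finset.mem_of_mem_erase hg
    have hwg : w ∈ g := by
      rcases Sym2.mem_iff.mp hx with rfl | rfl
      · exact hxg
      · rw [eq_mk_of_mem_edgeSet_of_forall_adj (hM.1.1 g hgM) hxg hv]
        exact Sym2.mem_mk_right _ _
    exact Finset.ne_of_mem_erase hg
      (hM.1.eq_of_mem_of_mem hgM he hwg (he_eq ▸ Sym2.mem_mk_right u w))
  refine ⟨_, hM.insert_erase he hvw.symm hdisj, ?_⟩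
  rintro ⟨g, hg, hug⟩
  rcases Finset.mem_insert.mp hg with rfl | hgM
  · rcases Sym2.mem_iff.mp hug with rfl | rfl
    · exact hvw.ne (hu v hvw.symm)
    · exact huv rfl
  · exact Finset.ne_of_mem_erase hgM
      (hM.1.eq_of_mem_of_mem (Finset.mem_of_mem_erase hgM) he hug hue)

end Matching

theorem divGraph_adj_iff {n : ℕ} (a b : {k : ℕ // k ∈ Finset.Icc 1 n}) :
    (divGraph n).Adj a b ↔ a ≠ b ∧ ((a : ℕ) ∣ (b : ℕ) ∨ (b : ℕ) ∣ (a : ℕ)) := by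
  rw [divGraph, SimpleGraph.fromRel_adj]
  tauto

theorem divGraph_adj_one {n : ℕ} {a : {k : ℕ // k ∈ Finset.Icc 1 n}}
    (h1 : 1 ∈ Finset.Icc 1 n) (ha : (a : ℕ) ≠ 1) : (divGraph n).Adj a ⟨1, h1⟩ :=
  (divGraph_adj_iff _ _).mpr ⟨fun h => ha (congrArg Subtype.val h), Or.inr (one_dvd _)⟩

theorem eq_one_of_divGraph_adj_prime {n r : ℕ} (hr : r.Prime) (hnr : n < 2 * r)
    (hrn : r ∈ Finset.Icc 1 n) (h1 : 1 ∈ Finset.Icc 1 n) (x : {k : ℕ // k ∈ Finset.Icc 1 n})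
    (hadj : (divGraph n).Adj ⟨r, hrn⟩ x) : x = ⟨1, h1⟩ := by
  obtain ⟨hne, hrx | hxr⟩ : _ ∧ (r ∣ (x : ℕ) ∨ (x : ℕ) ∣ r) :=
    (divGraph_adj_iff _ _).mp hadj
  · have hx := Finset.mem_Icc.mp x.2
    exact absurd (Subtype.ext (Nat.eq_of_dvd_of_lt_two_mul (by omega) hrx (by omega)).symm) hne
  · rcases hr.eq_one_or_self_of_dvd _ hxr with hx1 | hxr
    · exact Subtype.ext hx1
    · exact absurd (Subtype.ext hxr) hne.symm

theorem large_prime_mem_D_general (n p q : ℕ)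
    (hp : p.Prime) (hq : q.Prime) (hpq : p ≠ q)
    (hp1 : n < 2 * p) (hp2 : p ≤ n) (hq1 : n < 2 * q) (hq2 : q ≤ n) :
    ∃ M : Finset (Sym2 {k : ℕ // k ∈ Finset.Icc 1 n}),
      IsMaximumMatching (divGraph n) M ∧
        ¬ Covers M (⟨p, Finset.mem_Icc.mpr ⟨hp.one_lt.le, hp2⟩⟩ :
          {k : ℕ // k ∈ Finset.Icc 1 n}) := by
  have h1 : 1 ∈ Finset.Icc 1 n := Finset.mem_Icc.mpr ⟨le_rfl, hp.one_lt.le.trans hp2⟩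
  have hqn : q ∈ Finset.Icc 1 n := Finset.mem_Icc.mpr ⟨hq.one_lt.le, hq2⟩
  exact exists_isMaximumMatching_not_covers_of_common_neighbor
    (v := ⟨q, hqn⟩) (fun h => hpq (congrArg Subtype.val h))
    (eq_one_of_divGraph_adj_prime hp hp1 _ h1) (eq_one_of_divGraph_adj_prime hq hq1 hqn h1)
    (divGraph_adj_one h1 hq.one_lt.ne')

/-- If `p, q` are distinct primes with `n/2 < p ≤ n` and `n/2 < q ≤ n`, then `p ∈ D(Gₙ)`:
some maximum matching of the divisibility graph `Gₙ` does not cover `p`. -/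
theorem large_prime_mem_D (n p q : ℕ) (hn : 2 ≤ n)
    (hp : p.Prime) (hq : q.Prime) (hpq : p ≠ q)
    (hp1 : n < 2 * p) (hp2 : p ≤ n) (hq1 : n < 2 * q) (hq2 : q ≤ n) :
    ∃ M : Finset (Sym2 {k : ℕ // k ∈ Finset.Icc 1 n}),
      IsMaximumMatching (divGraph n) M ∧
        ¬ Covers M (⟨p, Finset.mem_Icc.mpr ⟨hp.one_lt.le, hp2⟩⟩ :
          {k : ℕ // k ∈ Finset.Icc 1 n}) :=
  large_prime_mem_D_general n p q hp hq hpq hp1 hp2 hq1 hq2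
end

section
/- There exists N such that for all n ≥ N there are at least two distinct primes p and q with n/2 < p < n and n/2 < q < n. -/
open Real in
/-- Strengthening of `Bertrand.real_main_inequality` with one extra factor of `2 * x`. -/
theorem my_real_main_inequality' {x : ℝ} (x_large : (512 : ℝ) ≤ x) :
    x * (2 * x) ^ (√(2 * x) + 1) * 4 ^ (2 * x / 3) ≤ 4 ^ x := by
  let f : ℝ → ℝ := fun x => log x + (√(2 * x) + 1) * log (2 * x) - log 4 / 3 * x
  have hf' : ∀ x, 0 < x → 0 < x * (2 * x) ^ (√(2 * x) + 1) / 4 ^ (x / 3) := fun x h =>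
    div_pos (mul_pos h (rpow_pos_of_pos (mul_pos two_pos h) _)) (rpow_pos_of_pos four_pos _)
  have hf : ∀ x, 0 < x → f x = log (x * (2 * x) ^ (√(2 * x) + 1) / 4 ^ (x / 3)) := by
    intro x h5
    have h6 := mul_pos (zero_lt_two' ℝ) h5
    have h7 := rpow_pos_of_pos h6 (√(2 * x) + 1)
    rw [log_div (mul_pos h5 h7).ne' (rpow_pos_of_pos four_pos _).ne', log_mul h5.ne' h7.ne',
      log_rpow h6, log_rpow zero_lt_four, ← mul_div_right_comm, ← mul_div, mul_comm x]
  have h5 : 0 < x := lt_of_lt_of_le (by norm_num1) x_large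
  rw [← div_le_one (rpow_pos_of_pos four_pos x), ← div_div_eq_mul_div, ← rpow_sub four_pos, ←
    mul_div 2 x, mul_div_left_comm, ← mul_one_sub, (by norm_num1 : (1 : ℝ) - 2 / 3 = 1 / 3),
    mul_one_div, ← log_nonpos_iff (hf' x h5).le, ← hf x h5]
  have h : ConcaveOn ℝ (Set.Ioi 0.5) f := by
    have hlog2x : ConcaveOn ℝ (Set.Ioi (0.5 : ℝ)) (fun x : ℝ => log (2 * x)) := by
      have := strictConcaveOn_log_Ioi.concaveOn.comp_linearMap ((2 : ℝ) • LinearMap.id)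
      refine this.subset (fun y hy => ?_) (convex_Ioi 0.5) |>.congr ?_
      · simp only [Set.mem_Ioi, Set.mem_preimage, LinearMap.smul_apply, LinearMap.id_coe, id_eq,
          smul_eq_mul] at hy ⊢
        linarith
      · intro y _
        simp [smul_eq_mul]
    have key : ConcaveOn ℝ (Set.Ioi (0.5 : ℝ))
        (fun x : ℝ => (log x + √(2 * x) * log (2 * x) + log (2 * x)) - log 4 / 3 * x) := by
      apply ConcaveOn.sub
      · apply ConcaveOn.add
        · apply ConcaveOn.add
          · exact strictConcaveOn_log_Ioi.concaveOn.subset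
              (Set.Ioi_subset_Ioi (by norm_num)) (convex_Ioi 0.5)
          · convert ((strictConcaveOn_sqrt_mul_log_Ioi.concaveOn.comp_linearMap
              ((2 : ℝ) • LinearMap.id))) using 1
            · rfl
            · rfl
            ext x
            simp only [Set.mem_Ioi, Set.mem_preimage, LinearMap.smul_apply,
              LinearMap.id_coe, id_eq, smul_eq_mul]
            rw [← mul_lt_mul_iff_right₀ (two_pos)]
            norm_num1
            rfl
            rfl
        · exact hlog2x
      · apply ConvexOn.smul
        · refine div_nonneg (log_nonneg (by norm_num1)) (by norm_num1)
        · exact convexOn_id (convex_Ioi (0.5 : ℝ))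
    refine key.congr ?_
    intro y _
    simp only [f]
    ring
  suffices ∃ x1 x2, 0.5 < x1 ∧ x1 < x2 ∧ x2 ≤ x ∧ 0 ≤ f x1 ∧ f x2 ≤ 0 by
    obtain ⟨x1, x2, h1, h2, h0, h3, h4⟩ := this
    exact (h.right_le_of_le_left'' h1 ((h1.trans h2).trans_le h0) h2 h0 (h4.trans h3)).trans h4
  refine ⟨18, 512, by norm_num1, by norm_num1, x_large, ?_, ?_⟩
  · have : √(2 * 18 : ℝ) = 6 := (sqrt_eq_iff_mul_self_eq_of_pos (by norm_num1)).mpr (by norm_num1)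
    rw [hf _ (by norm_num1), log_nonneg_iff (by positivity), this, one_le_div (by norm_num1)]
    norm_num1
  · have h32 : √(2 * 512 : ℝ) = 32 :=
      (sqrt_eq_iff_mul_self_eq_of_pos (by norm_num1)).mpr (by norm_num1)
    rw [hf _ (by norm_num1), log_nonpos_iff (hf' _ (by norm_num1)).le, h32,
        div_le_one (by positivity)]
    have h1 : (512 : ℝ) * (2 * 512) ^ ((32 : ℝ) + 1) = 2 ^ ((339 : ℝ)) := by
      rw [show ((2:ℝ) * 512) = 2 ^ ((10:ℝ)) by norm_num,
        show ((512:ℝ)) = 2 ^ ((9:ℝ)) by norm_num,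
        ← rpow_mul (by norm_num), ← rpow_add (by norm_num)]
      norm_num
    have h2 : (4 : ℝ) ^ ((512 : ℝ) / 3) = 2 ^ ((1024 : ℝ) / 3) := by
      rw [show (4:ℝ) = 2 ^ ((2:ℝ)) by norm_num, ← rpow_mul (by norm_num)]
      norm_num
    rw [h1, h2]
    apply rpow_le_rpow_of_exponent_le (by norm_num)
    norm_num

open Nat


theorem my_main_inequality {n : ℕ} (n_large : 512 ≤ n) :
    n * (2 * n) ^ (Nat.sqrt (2 * n) + 1) * 4 ^ (2 * n / 3) ≤ 4 ^ n := by
  rw [← @Nat.cast_le ℝ]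
  push_cast
  simp only [← Real.rpow_natCast]
  refine le_trans ?_ (my_real_main_inequality' (by exact_mod_cast n_large))
  push_cast
  have hn : (512:ℝ) ≤ n := by exact_mod_cast n_large
  gcongr
  · linarith
  · exact_mod_cast Real.nat_sqrt_le_real_sqrt
  · norm_num1
  · exact Nat.cast_div_le.trans (by norm_cast)

theorem my_centralBinom_le (n : ℕ) (n_large : 2 < n) (p0 : ℕ)
    (no_prime : ¬∃ p : ℕ, Nat.Prime p ∧ n < p ∧ p ≤ 2 * n ∧ p ≠ p0) :
    centralBinom n ≤ (2 * n) * ((2 * n) ^ Nat.sqrt (2 * n) * 4 ^ (2 * n / 3)) := by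
  have n_pos : 0 < n := (Nat.zero_le _).trans_lt n_large
  have n2_pos : 1 ≤ 2 * n := mul_pos (zero_lt_two' ℕ) n_pos
  have hfpos : ∀ x : ℕ, 0 < x ^ (centralBinom n).factorization x := by
    intro x
    rcases Nat.eq_zero_or_pos x with rfl | hx
    · rw [Nat.factorization_eq_zero_of_not_prime _ (by norm_num), pow_zero]
      norm_num
    · positivity
  have step1 : centralBinom n ≤
      p0 ^ (centralBinom n).factorization p0 *
        ∏ p ∈ Finset.range (2 * n / 3 + 1), p ^ (centralBinom n).factorization p := by
    rcases le_or_gt p0 (2 * n / 3) with hp0 | hp0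
    · have : ¬∃ p : ℕ, Nat.Prime p ∧ n < p ∧ p ≤ 2 * n := by
        rintro ⟨p, hp, h1, h2⟩
        exact no_prime ⟨p, hp, h1, h2, by omega⟩
      refine le_of_eq (centralBinom_factorization_small n n_large (fun p hp h1 => not_le.1 fun h2 => this ⟨p, hp, h1, h2⟩)) |>.trans
        (Nat.le_mul_of_pos_left _ (hfpos p0))
    rcases le_or_gt p0 (2 * n) with hp0' | hp0'
    · have hsub : insert p0 (Finset.range (2 * n / 3 + 1)) ⊆ Finset.range (2 * n + 1) := by
        intro x hx
        simp only [Finset.mem_insert, Finset.mem_range] at hx ⊢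
        omega
      have hnotmem : p0 ∉ Finset.range (2 * n / 3 + 1) := by
        simp only [Finset.mem_range]; omega
      refine le_of_eq ((prod_pow_factorization_centralBinom n).symm.trans ?_)
      rw [← Finset.prod_insert (f := fun x => x ^ (centralBinom n).factorization x) hnotmem]
      refine (Finset.prod_subset hsub ?_).symm
      intro x hx hx'
      simp only [Finset.mem_insert, Finset.mem_range, not_or] at hx hx'
      obtain ⟨hxne, hxbig⟩ := hx'
      by_cases hxp : x.Prime
      · rcases le_or_gt x n with hxn | hxn
        · rw [factorization_centralBinom_of_two_mul_self_lt_three_mul n_large hxn (by omega),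
            pow_zero]
        · exact absurd ⟨x, hxp, hxn, by omega, hxne⟩ no_prime
      · rw [Nat.factorization_eq_zero_of_not_prime _ hxp, pow_zero]
    · have : ¬∃ p : ℕ, Nat.Prime p ∧ n < p ∧ p ≤ 2 * n := by
        rintro ⟨p, hp, h1, h2⟩
        exact no_prime ⟨p, hp, h1, h2, by omega⟩
      refine le_of_eq (centralBinom_factorization_small n n_large (fun p hp h1 => not_le.1 fun h2 => this ⟨p, hp, h1, h2⟩)) |>.trans
        (Nat.le_mul_of_pos_left _ (hfpos p0))
  refine step1.trans (Nat.mul_le_mul ?_ ?_)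
  · exact Nat.pow_factorization_choose_le (by omega)
  · -- adapted from centralBinom_le_of_no_bertrand_prime
    let S := (Finset.range (2 * n / 3 + 1)).filter Nat.Prime
    let f := fun x => x ^ n.centralBinom.factorization x
    have hS : ∏ x ∈ S, f x = ∏ x ∈ Finset.range (2 * n / 3 + 1), f x := by
      refine Finset.prod_filter_of_ne fun p _ h => ?_
      contrapose! h; dsimp only [f]
      rw [factorization_eq_zero_of_not_prime n.centralBinom h, _root_.pow_zero]
    rw [← hS, ← Finset.prod_filter_mul_prod_filter_not S (· ≤ Nat.sqrt (2 * n))]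
    apply mul_le_mul'
    · refine (Finset.prod_le_prod' fun p _ => (?_ : f p ≤ 2 * n)).trans ?_
      · exact pow_factorization_choose_le (mul_pos two_pos n_pos)
      have : (Finset.Icc 1 (Nat.sqrt (2 * n))).card = Nat.sqrt (2 * n) := by
        rw [card_Icc, Nat.add_sub_cancel]
      rw [Finset.prod_const]
      refine pow_right_mono₀ n2_pos ((Finset.card_le_card fun x hx => ?_).trans this.le)
      obtain ⟨h1, h2⟩ := Finset.mem_filter.1 hx
      exact Finset.mem_Icc.mpr ⟨(Finset.mem_filter.1 h1).2.one_lt.le, h2⟩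
    · refine le_trans ?_ (primorial_le_4_pow (2 * n / 3))
      refine (Finset.prod_le_prod' fun p hp => (?_ : f p ≤ p)).trans ?_
      · obtain ⟨h1, h2⟩ := Finset.mem_filter.1 hp
        refine (pow_right_mono₀ (Finset.mem_filter.1 h1).2.one_lt.le ?_).trans (pow_one p).le
        exact Nat.factorization_choose_le_one (sqrt_lt'.mp <| not_le.1 h2)
      refine Finset.prod_le_prod_of_subset_of_one_le' (Finset.filter_subset _ _) ?_
      exact fun p hp _ => (Finset.mem_filter.1 hp).2.one_lt.le

theorem two_primes_between {n : ℕ} (n_large : 512 ≤ n) :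
    ∃ p q : ℕ, p.Prime ∧ q.Prime ∧ p ≠ q ∧ n < p ∧ p ≤ 2 * n ∧ n < q ∧ q ≤ 2 * n := by
  obtain ⟨p, hp, hnp, hp2n⟩ := Nat.exists_prime_lt_and_le_two_mul n (by omega)
  by_contra hcon
  push_neg at hcon
  have no_prime : ¬∃ q : ℕ, Nat.Prime q ∧ n < q ∧ q ≤ 2 * n ∧ q ≠ p := by
    rintro ⟨q, hq, h1, h2, h3⟩
    exact absurd (hcon q p hq hp h3 h1 h2 hnp) (by omega)
  have H1 := my_main_inequality n_large
  have H2 : 4 ^ n < n * n.centralBinom :=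
    Nat.four_pow_lt_mul_centralBinom n (le_trans (by norm_num1) n_large)
  have H3 := my_centralBinom_le n (by omega) p no_prime
  have : n * n.centralBinom ≤ n * ((2 * n) * ((2 * n) ^ Nat.sqrt (2 * n) * 4 ^ (2 * n / 3))) :=
    Nat.mul_le_mul_left n H3
  have heq : n * ((2 * n) * ((2 * n) ^ Nat.sqrt (2 * n) * 4 ^ (2 * n / 3)))
      = n * (2 * n) ^ (Nat.sqrt (2 * n) + 1) * 4 ^ (2 * n / 3) := by ring
  omega


/-- For all sufficiently large `n` there are at least two distinct primes `p, q` with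
`n/2 < p < n` and `n/2 < q < n` (the condition `n/2 < p` is stated as `n < 2 * p`). -/
theorem exists_two_primes_in_upper_half :
    ∃ N : ℕ, ∀ n : ℕ, N ≤ n →
      ∃ p q : ℕ, p.Prime ∧ q.Prime ∧ p ≠ q ∧
        n < 2 * p ∧ p < n ∧ n < 2 * q ∧ q < n := by
  refine ⟨1025, fun n hn => ?_⟩
  set m := n / 2 with hm
  have hm512 : 512 ≤ m := by omega
  obtain ⟨p, q, hp, hq, hpq, h1, h2, h3, h4⟩ := two_primes_between hm512
  have key : ∀ r : ℕ, r.Prime → m < r → r ≤ 2 * m → n < 2 * r ∧ r < n := by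
    intro r hr h1 h2
    constructor
    · omega
    · rcases Nat.lt_or_ge r n with h | h
      · exact h
      · -- r ≥ n, r ≤ 2m ≤ n, so r = n = 2m, n even, r prime even > 2: contradiction
        have hrn : r = n := by omega
        have hneven : 2 * m = n := by omega
        have : 2 ∣ r := by omega
        have := (Nat.Prime.eq_one_or_self_of_dvd hr 2 this).resolve_left (by norm_num)
        omega
  obtain ⟨hA, hB⟩ := key p hp h1 h2
  obtain ⟨hC, hD⟩ := key q hq h3 h4
  exact ⟨p, q, hp, hq, hpq, hA, hB, hC, hD⟩
end
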